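/- Any map C⁰-close to g has no fixed points in D: if h : M → M satisfies sup_{x ∈ M} dist(h(x), g(x)) < π − 2, then h(p) ≠ p for every p ∈ D. -/

import Mathlib

open Real MeasureTheory

noncomputable section

instance : Fact (0 < 2 * π) := ⟨by positivity⟩

/-- The cylinder `(ℝ/2πℤ) × ℝ`. -/
abbrev Cyl : Type := AddCircle (2 * π) × ℝ

/-- The quotient map `ℝ² → Cyl`. -/
def q2 (v : ℝ × ℝ) : Cyl := ((v.1 : AddCircle (2 * π)), v.2)

/-- The lift of a point of the cylinder to the fundamental domain `[-π, π) × ℝ`. -/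
def cylLift (m : Cyl) : ℝ × ℝ :=
  ((AddCircle.equivIco (2 * π) (-π) m.1 : ℝ), m.2)

/-- The Euclidean norm on `ℝ × ℝ`. -/
def eNorm (v : ℝ × ℝ) : ℝ := Real.sqrt (v.1 ^ 2 + v.2 ^ 2)

/-- Rotation of the plane about the origin by angle `a`. -/
def rot (a : ℝ) (v : ℝ × ℝ) : ℝ × ℝ :=
  (Real.cos a * v.1 - Real.sin a * v.2, Real.sin a * v.1 + Real.cos a * v.2)

/-- The planar twist map: rotate `v` about the origin by the angle `α (eNorm v)`. -/
def twist (α : ℝ → ℝ) (v : ℝ × ℝ) : ℝ × ℝ := rot (α (eNorm v)) v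

/-- The twist map descended to the cylinder. -/
def psi (α : ℝ → ℝ) (m : Cyl) : Cyl := q2 (twist α (cylLift m))

/-- The half rotation `(θ, s) ↦ (θ + π, s)` of the cylinder. -/
def phi (m : Cyl) : Cyl := (m.1 + ((π : ℝ) : AddCircle (2 * π)), m.2)

/-- The composition `g = φ ∘ ψ`. -/
def gmap (α : ℝ → ℝ) : Cyl → Cyl := phi ∘ psi α

/-- The image in the cylinder of the open Euclidean unit disk centered at the origin. -/
def Dset : Set Cyl := q2 '' {v : ℝ × ℝ | eNorm v < 1}

/-- The distance on the cylinder induced by the Euclidean metric on `ℝ²`. -/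
def cylDist (x y : Cyl) : ℝ := Real.sqrt (dist x.1 y.1 ^ 2 + dist x.2 y.2 ^ 2)

/-- The hypotheses on the twist angle profile `α`: continuous, non-increasing on `[0, ∞)`,
greater than `0.2` on `[0, 0.7]` and vanishing on `[0.9, ∞)`. -/
structure TwistAngle (α : ℝ → ℝ) : Prop where
  cont : Continuous α
  anti : AntitoneOn α (Set.Ici 0)
  big : ∀ r ∈ Set.Icc (0 : ℝ) 0.7, 0.2 < α r
  zero : ∀ r : ℝ, 0.9 ≤ r → α r = 0

lemma abs_fst_lt_one_of_eNorm_lt_one {v : ℝ × ℝ} (hv : eNorm v < 1) : |v.1| < 1 := by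
  have hsq : v.1 ^ 2 + v.2 ^ 2 < 1 := by
    rw [eNorm, Real.sqrt_lt' one_pos] at hv
    simpa using hv
  exact abs_lt_of_sq_lt_sq (by nlinarith [sq_nonneg v.2]) zero_le_one

lemma eNorm_rot (a : ℝ) (v : ℝ × ℝ) : eNorm (rot a v) = eNorm v := by
  unfold eNorm rot
  congr 1
  linear_combination (v.1 ^ 2 + v.2 ^ 2) * Real.sin_sq_add_cos_sq a

lemma eNorm_twist (α : ℝ → ℝ) (v : ℝ × ℝ) : eNorm (twist α v) = eNorm v :=
  eNorm_rot _ v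

lemma cylLift_q2 {v : ℝ × ℝ} (hv : v.1 ∈ Set.Ico (-π) π) : cylLift (q2 v) = v := by
  have hv' : v.1 ∈ Set.Ico (-π) (-π + 2 * π) := by rwa [show -π + 2 * π = π by ring]
  have : AddCircle.equivIco (2 * π) (-π) (v.1 : AddCircle (2 * π)) = ⟨v.1, hv'⟩ := by
    rw [← Equiv.eq_symm_apply]; rfl
  simp only [cylLift, q2, this]

lemma psi_q2 (α : ℝ → ℝ) {v : ℝ × ℝ} (hv : v.1 ∈ Set.Ico (-π) π) :
    psi α (q2 v) = q2 (twist α v) := by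
  rw [psi, cylLift_q2 hv]

lemma phi_q2 (v : ℝ × ℝ) : phi (q2 v) = q2 (v.1 + π, v.2) := by
  simp [phi, q2]

lemma dist_fst_le_cylDist (x y : Cyl) : dist x.1 y.1 ≤ cylDist x y :=
  Real.le_sqrt_of_sq_le (le_add_of_nonneg_right (sq_nonneg _))

lemma AddCircle.norm_coe_add_half_period {p t : ℝ} (hp : 0 < p) (ht : |t| ≤ p / 2) :
    ‖((t + p / 2 : ℝ) : AddCircle p)‖ = p / 2 - |t| := by
  rcases le_total t 0 with ht0 | ht0
  · rw [abs_of_nonpos ht0] at ht ⊢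
    rw [(AddCircle.norm_coe_eq_abs_iff p hp.ne').2, abs_of_nonneg (by linarith)]
    · ring
    · rw [abs_of_nonneg (by linarith), abs_of_pos hp]; linarith
  · rw [abs_of_nonneg ht0] at ht ⊢
    rw [← sub_add_cancel (t + p / 2) p, AddCircle.coe_add_period,
      (AddCircle.norm_coe_eq_abs_iff p hp.ne').2, abs_of_nonpos (by linarith)]
    · ring
    · rw [abs_of_nonpos (by linarith), abs_of_pos hp]; linarith

/-- Both `v` and its twist lie in the strip `|θ| < 1`, while `φ` adds `π` to the angle,
so `g` moves every point of `D` by more than `π - 2` in the circle direction. -/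
lemma pi_sub_two_lt_cylDist_gmap (α : ℝ → ℝ) {p : Cyl} (hp : p ∈ Dset) :
    π - 2 < cylDist p (gmap α p) := by
  obtain ⟨v, hv, rfl⟩ := hp
  set w := twist α v
  have hv1 := abs_lt.1 (abs_fst_lt_one_of_eNorm_lt_one hv)
  have hw1 := abs_lt.1 (abs_fst_lt_one_of_eNorm_lt_one ((eNorm_twist α v).trans_lt hv))
  have hpi := Real.pi_gt_three
  have hv_Ico : v.1 ∈ Set.Ico (-π) π := ⟨by linarith, by linarith⟩
  have hgap : |w.1 - v.1| < 2 := abs_lt.2 ⟨by linarith, by linarith⟩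
  have hdist : dist (v.1 : AddCircle (2 * π)) ((w.1 + π : ℝ) : AddCircle (2 * π))
      = π - |w.1 - v.1| := by
    rw [dist_comm, dist_eq_norm, ← AddCircle.coe_sub,
      show w.1 + π - v.1 = (w.1 - v.1) + 2 * π / 2 by ring,
      AddCircle.norm_coe_add_half_period (by positivity) (by linarith)]
    ring
  calc π - 2 < π - |w.1 - v.1| := by linarith
    _ = dist (q2 v).1 (gmap α (q2 v)).1 := by
      rw [gmap, Function.comp_apply, psi_q2 α hv_Ico, phi_q2]; exact hdist.symm
    _ ≤ cylDist (q2 v) (gmap α (q2 v)) := dist_fst_le_cylDist _ _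

theorem no_fixed_points_in_disk_general (α : ℝ → ℝ) (h : Cyl → Cyl)
    (hclose : (⨆ x : Cyl, ENNReal.ofReal (cylDist (h x) (gmap α x))) <
      ENNReal.ofReal (π - 2)) :
    ∀ p ∈ Dset, h p ≠ p := by
  intro p hp hfix
  have hclose_p : cylDist (h p) (gmap α p) < π - 2 :=
    (ENNReal.ofReal_lt_ofReal_iff'.1 ((le_iSup _ p).trans_lt hclose)).1
  rw [hfix] at hclose_p
  exact (pi_sub_two_lt_cylDist_gmap α hp).not_gt hclose_p

/-- any map at C⁰-distance less than π − 2 from g has no fixed points in D. -/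
theorem no_fixed_points_in_disk (α : ℝ → ℝ) (hα : TwistAngle α) (h : Cyl → Cyl)
    (hclose : (⨆ x : Cyl, ENNReal.ofReal (cylDist (h x) (gmap α x))) <
      ENNReal.ofReal (π - 2)) :
    ∀ p ∈ Dset, h p ≠ p :=
  no_fixed_points_in_disk_general α h hclose
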